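/- Let G be a graph and K a Hausdorff topological group with compact subset A. Then G has an A-tension (values in A, antisymmetric, summing to zero around every finite cycle) if and only if for every finite set 𝒞 of finite oriented cycles of G there is a map with values in A summing to zero around every cycle in 𝒞. -/

import Mathlib

/-!
A tension with values in `A` is a point of the product `∏_{x,y} A_{xy}`, where
`A_{xy} = A` on edges and `{0}` on non-edges (values off the edges are irrelevant, so they
may be reset to `0`). This product is compact by Tychonoff, antisymmetry is a closed
condition, and each cycle condition is closed because `walkSum · c` is a finite sum of
coordinate projections. Solvability of every finite family of cycle conditions is the finite
intersection property, so all of them have a common solution.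
-/

/-- The sum of the values of `f` along the darts of a walk (in order). -/
def walkSum {V K : Type*} [AddGroup K] {G : SimpleGraph V} {u v : V}
    (f : V → V → K) (p : G.Walk u v) : K :=
  (p.darts.map fun d => f d.toProd.1 d.toProd.2).sum

open Set

section Tension

variable {V K : Type*} [AddGroup K] {G : SimpleGraph V}

def SimpleGraph.IsTension (G : SimpleGraph V) (A : Set K) (M : Set (Σ v : V, G.Walk v v))
    (f : V → V → K) : Prop :=
  (∀ x y, G.Adj x y → f x y ∈ A) ∧ (∀ x y, f y x = -f x y) ∧
    ∀ c ∈ M, walkSum f c.2 = 0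

lemma walkSum_congr {f g : V → V → K} (h : ∀ x y, G.Adj x y → f x y = g x y)
    {u v : V} (p : G.Walk u v) : walkSum f p = walkSum g p :=
  congrArg List.sum <| List.map_congr_left fun d _ => h _ _ d.adj

lemma continuous_walkSum [TopologicalSpace K] [IsTopologicalAddGroup K] {u v : V}
    (p : G.Walk u v) : Continuous fun f : V → V → K => walkSum f p :=
  continuous_list_sum _ fun d _ => (continuous_apply d.toProd.2).comp (continuous_apply d.toProd.1)

open Classical in
variable (G) in
noncomputable def restrictToAdj (f : V → V → K) : V → V → K :=
  fun x y => if G.Adj x y then f x y else 0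

lemma restrictToAdj_eq_of_adj (f : V → V → K) {x y : V} (h : G.Adj x y) :
    restrictToAdj G f x y = f x y :=
  if_pos h

lemma restrictToAdj_antisymm {f : V → V → K} (hf : ∀ x y, f y x = -f x y) (x y : V) :
    restrictToAdj G f y x = -restrictToAdj G f x y := by
  by_cases h : G.Adj x y
  · simp only [restrictToAdj, h, h.symm, if_true, hf x y]
  · have h' : ¬G.Adj y x := fun h' => h h'.symm
    simp only [restrictToAdj, h, h', if_false, neg_zero]

lemma SimpleGraph.IsTension.restrictToAdj {A : Set K} {M : Set (Σ v : V, G.Walk v v)}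
    {f : V → V → K} (hf : G.IsTension A M f) : G.IsTension A M (restrictToAdj G f) :=
  ⟨fun x y h => (restrictToAdj_eq_of_adj f h).symm ▸ hf.1 x y h,
    restrictToAdj_antisymm hf.2.1,
    fun c hc => (walkSum_congr (fun _ _ => restrictToAdj_eq_of_adj f) c.2).trans (hf.2.2 c hc)⟩

open Classical in
variable (G) in
def adjBox (A : Set K) : Set (V → V → K) :=
  univ.pi fun x => univ.pi fun y => if G.Adj x y then A else {0}

lemma restrictToAdj_mem_adjBox {A : Set K} {f : V → V → K}
    (hf : ∀ x y, G.Adj x y → f x y ∈ A) : restrictToAdj G f ∈ adjBox G A := by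
  intro x _ y _
  by_cases h : G.Adj x y
  · simpa only [restrictToAdj, h, if_true] using hf x y h
  · simp only [restrictToAdj, h, if_false, mem_singleton_iff]

variable [TopologicalSpace K]

lemma isCompact_adjBox {A : Set K} (hA : IsCompact A) : IsCompact (adjBox G A) :=
  isCompact_univ_pi fun x => isCompact_univ_pi fun y => by
    split_ifs
    exacts [hA, isCompact_singleton]

lemma isClosed_setOf_antisymm [IsTopologicalAddGroup K] [T2Space K] :
    IsClosed {f : V → V → K | ∀ x y, f y x = -f x y} := by
  simp only [ofPred_forall]
  exact isClosed_iInter fun x => isClosed_iInter fun y => isClosed_eq (by fun_prop) (by fun_prop)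

theorem exists_isTension_of_forall_finset [IsTopologicalAddGroup K] [T2Space K] {A : Set K}
    (hA : IsCompact A) (M : Set (Σ v : V, G.Walk v v))
    (h : ∀ s : Finset (Σ v : V, G.Walk v v), ↑s ⊆ M → ∃ f, G.IsTension A s f) :
    ∃ f, G.IsTension A M f := by
  set S := adjBox G A ∩ {f : V → V → K | ∀ x y, f y x = -f x y}
  have hS : IsCompact S := (isCompact_adjBox hA).inter_right isClosed_setOf_antisymm
  let t : M → Set (V → V → K) := fun c => {f | walkSum f c.1.2 = 0}
  have ht : ∀ c, IsClosed (t c) := fun c => isClosed_eq (continuous_walkSum _) continuous_const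
  have hfin : ∀ u : Finset M, (S ∩ ⋂ c ∈ u, t c).Nonempty := by
    intro u
    obtain ⟨f, hf⟩ := h (u.map (Function.Embedding.subtype _)) (by simp)
    have hf' := hf.restrictToAdj
    refine ⟨restrictToAdj G f, ⟨restrictToAdj_mem_adjBox hf.1, hf'.2.1⟩, ?_⟩
    simp only [mem_iInter]
    exact fun c hc => hf'.2.2 c (by simpa using hc)
  obtain ⟨f, ⟨hfA, hf_antisymm⟩, hf_cycles⟩ := hS.inter_iInter_nonempty t ht hfin
  refine ⟨f, fun x y hxy => ?_, hf_antisymm, fun c hc => mem_iInter.mp hf_cycles ⟨c, hc⟩⟩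
  simpa [hxy] using hfA x (mem_univ x) y (mem_univ y)

end Tension

/-- Compactness theorem for `A`-tensions: `G` has an `A`-tension (values in the
compact set `A`, antisymmetric, summing to zero around every finite cycle) iff for
every finite family of finite cycles of `G` there is a map with values in `A`
summing to zero around every cycle of the family. -/
theorem stmt18 {V K : Type*} [AddGroup K] [TopologicalSpace K]
    [IsTopologicalAddGroup K] [T2Space K]
    (G : SimpleGraph V) (A : Set K) (hA : IsCompact A) :
    (∃ f : V → V → K,
        (∀ x y, G.Adj x y → f x y ∈ A) ∧
        (∀ x y : V, f y x = - f x y) ∧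
        (∀ (v : V) (c : G.Walk v v), c.IsCycle → walkSum f c = 0)) ↔
      ∀ (n : ℕ) (C : Fin n → Σ v : V, G.Walk v v), (∀ i, (C i).2.IsCycle) →
        ∃ f : V → V → K,
          (∀ x y, G.Adj x y → f x y ∈ A) ∧
          (∀ x y : V, f y x = - f x y) ∧
          (∀ i, walkSum f (C i).2 = 0) := by
  constructor
  · rintro ⟨f, hA, hf, hcyc⟩ n C hC
    exact ⟨f, hA, hf, fun i => hcyc _ _ (hC i)⟩
  · intro H
    obtain ⟨f, hfA, hf, hcyc⟩ := exists_isTension_of_forall_finset (G := G) hA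
      {c | c.2.IsCycle} fun s hs => by
        let C : Fin s.card → Σ v : V, G.Walk v v := fun i => (s.equivFin.symm i).1
        obtain ⟨f, hfA, hf, hC⟩ := H s.card C fun i => hs (s.equivFin.symm i).2
        refine ⟨f, hfA, hf, fun c hc => ?_⟩
        have := hC (s.equivFin ⟨c, hc⟩)
        rwa [show C (s.equivFin ⟨c, hc⟩) = c from congrArg Subtype.val
          (s.equivFin.symm_apply_apply _)] at this
    exact ⟨f, hfA, hf, fun v c hc => hcyc ⟨v, c⟩ hc⟩
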